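/- arXiv:1608.02086 — 9 statements merged into one kernel-verified Lean document; each statement's English description precedes it below -/
import Mathlib

section
/- The path semigroup S is an inverse semigroup: every element of S has a unique inverse element (where b is an inverse of a if a = a*b*a and b = b*a*b). -/
/-- The path semigroup `S` on a poset `K`, presented by generators and relations.
`down a b h` is the elementary path `(a,b)` (with `a ≤ b`) from `b` down to `a`;
`up a b h` is the elementary path `\overline{(a,b)}` (with `b ≤ a`) from `b` up to `a`;
`idem a` is the trivial path `i_a`; `zero` is the empty path `0`;
`src` is the starting point `∂₁` and `tgt` the ending point `∂₀` (both `none` only on `0`). -/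
structure PathSemigroup (K : Type*) [PartialOrder K] where
  S : Type*
  mul : S → S → S
  zero : S
  idem : K → S
  down : (a b : K) → a ≤ b → S
  up : (a b : K) → b ≤ a → S
  src : S → Option K
  tgt : S → Option K
  inv : S → S
  mul_assoc : ∀ p q r : S, mul (mul p q) r = mul p (mul q r)
  zero_mul : ∀ p : S, mul zero p = zero
  mul_zero : ∀ p : S, mul p zero = zero
  src_eq_none : ∀ p : S, src p = none ↔ p = zero
  tgt_eq_none : ∀ p : S, tgt p = none ↔ p = zero
  src_idem : ∀ a : K, src (idem a) = some a
  tgt_idem : ∀ a : K, tgt (idem a) = some a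
  src_down : ∀ (a b : K) (h : a ≤ b), src (down a b h) = some b
  tgt_down : ∀ (a b : K) (h : a ≤ b), tgt (down a b h) = some a
  src_up : ∀ (a b : K) (h : b ≤ a), src (up a b h) = some b
  tgt_up : ∀ (a b : K) (h : b ≤ a), tgt (up a b h) = some a
  mul_eq_zero_iff : ∀ p q : S, mul p q = zero ↔ (p = zero ∨ q = zero ∨ src p ≠ tgt q)
  src_mul : ∀ p q : S, mul p q ≠ zero → src (mul p q) = src q
  tgt_mul : ∀ p q : S, mul p q ≠ zero → tgt (mul p q) = tgt p
  inv_zero : inv zero = zero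
  inv_idem : ∀ a : K, inv (idem a) = idem a
  inv_down : ∀ (a b : K) (h : a ≤ b), inv (down a b h) = up b a h
  inv_up : ∀ (a b : K) (h : b ≤ a), inv (up a b h) = down b a h
  inv_inv : ∀ p : S, inv (inv p) = p
  src_inv : ∀ p : S, src (inv p) = tgt p
  tgt_inv : ∀ p : S, tgt (inv p) = src p
  inv_mul : ∀ p q : S, inv (mul p q) = mul (inv q) (inv p)
  down_mul_down : ∀ (a b c : K) (hab : a ≤ b) (hbc : b ≤ c),
    mul (down a b hab) (down b c hbc) = down a c (le_trans hab hbc)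
  up_mul_up : ∀ (a b c : K) (hab : a ≤ b) (hbc : b ≤ c),
    mul (up c b hbc) (up b a hab) = up c a (le_trans hab hbc)
  up_mul_down : ∀ (a b : K) (h : a ≤ b), mul (up b a h) (down a b h) = idem b
  down_mul_up : ∀ (a b : K) (h : a ≤ b), mul (down a b h) (up b a h) = idem a
  down_mul_idem : ∀ (a b : K) (h : a ≤ b), mul (down a b h) (idem b) = down a b h
  idem_mul_down : ∀ (a b : K) (h : a ≤ b), mul (idem a) (down a b h) = down a b h
  up_mul_idem : ∀ (a b : K) (h : b ≤ a), mul (up a b h) (idem b) = up a b h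
  idem_mul_up : ∀ (a b : K) (h : b ≤ a), mul (idem a) (up a b h) = up a b h
  idem_mul_idem : ∀ a : K, mul (idem a) (idem a) = idem a
  generated : ∀ p : S, p ≠ zero → ∀ P : S → Prop,
    (∀ a : K, P (idem a)) →
    (∀ (a b : K) (h : a ≤ b), P (down a b h)) →
    (∀ (a b : K) (h : b ≤ a), P (up a b h)) →
    (∀ x y : S, P x → P y → mul x y ≠ zero → P (mul x y)) →
    P p

namespace PathSemigroup

variable {K : Type*} [PartialOrder K]

/-- The 1-simplex `[a^x c] = (a,x) * \overline{(x,c)}` with support `x`. -/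
def simplex (P : PathSemigroup K) (a x c : K) (h1 : a ≤ x) (h2 : c ≤ x) : P.S :=
  P.mul (P.down a x h1) (P.up x c h2)

/-- The set `G_a` of loops that start and end at `a`. -/
def Loop (P : PathSemigroup K) (a : K) : Set P.S :=
  {p | p ≠ P.zero ∧ P.tgt p = some a ∧ P.src p = some a}

end PathSemigroup

lemma PathSemigroup.key {K : Type*} [PartialOrder K] (P : PathSemigroup K)
    (p : P.S) (hp : p ≠ P.zero) :
    ∀ a b : K, P.tgt p = some a → P.src p = some b →
      P.mul (P.idem a) p = p ∧ P.mul p (P.idem b) = p ∧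
      P.mul p (P.inv p) = P.idem a ∧ P.mul (P.inv p) p = P.idem b := by
  refine P.generated p hp
    (fun q => ∀ a b : K, P.tgt q = some a → P.src q = some b →
      P.mul (P.idem a) q = q ∧ P.mul q (P.idem b) = q ∧
      P.mul q (P.inv q) = P.idem a ∧ P.mul (P.inv q) q = P.idem b) ?_ ?_ ?_ ?_
  · intro c a b ht hs
    rw [P.tgt_idem] at ht
    rw [P.src_idem] at hs
    injection ht with ht; subst ht
    injection hs with hs; subst hs
    exact ⟨P.idem_mul_idem c, P.idem_mul_idem c, by rw [P.inv_idem]; exact P.idem_mul_idem c,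
      by rw [P.inv_idem]; exact P.idem_mul_idem c⟩
  · intro c d h a b ht hs
    rw [P.tgt_down] at ht
    rw [P.src_down] at hs
    injection ht with ht; subst ht
    injection hs with hs; subst hs
    exact ⟨P.idem_mul_down c d h, P.down_mul_idem c d h,
      by rw [P.inv_down]; exact P.down_mul_up c d h,
      by rw [P.inv_down]; exact P.up_mul_down c d h⟩
  · intro c d h a b ht hs
    rw [P.tgt_up] at ht
    rw [P.src_up] at hs
    injection ht with ht; subst ht
    injection hs with hs; subst hs
    exact ⟨P.idem_mul_up c d h, P.up_mul_idem c d h,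
      by rw [P.inv_up]; exact P.up_mul_down d c h,
      by rw [P.inv_up]; exact P.down_mul_up d c h⟩
  · intro x y Px Py hxy a b ht hs
    have hx0 : x ≠ P.zero := fun h => hxy (by rw [h, P.zero_mul])
    have hy0 : y ≠ P.zero := fun h => hxy (by rw [h, P.mul_zero])
    have hst : P.src x = P.tgt y := by
      by_contra hne
      exact hxy ((P.mul_eq_zero_iff x y).mpr (Or.inr (Or.inr hne)))
    obtain ⟨m, hm⟩ : ∃ m, P.tgt y = some m :=
      Option.ne_none_iff_exists'.mp (fun h => hy0 ((P.tgt_eq_none y).mp h))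
    have htx : P.tgt x = some a := by rw [← P.tgt_mul x y hxy]; exact ht
    have hsy : P.src y = some b := by rw [← P.src_mul x y hxy]; exact hs
    obtain ⟨hix, hxi, hxu, hux⟩ := Px a m htx (hst.trans hm)
    obtain ⟨hiy, hyi, hyu, huy⟩ := Py m b hm hsy
    refine ⟨?_, ?_, ?_, ?_⟩
    · rw [← P.mul_assoc, hix]
    · rw [P.mul_assoc, hyi]
    · rw [P.inv_mul, P.mul_assoc x y, ← P.mul_assoc y, hyu, ← P.mul_assoc, hxi, hxu]
    · rw [P.inv_mul, P.mul_assoc, ← P.mul_assoc (P.inv x), hux, hiy, huy]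

/-- The path semigroup `S` is an inverse semigroup: every element has a unique
inverse element `q` (meaning `p = p*q*p` and `q = q*p*q`). -/
theorem statement4 {K : Type*} [PartialOrder K] (P : PathSemigroup K) :
    ∀ p : P.S, ∃! q : P.S, p = P.mul (P.mul p q) p ∧ q = P.mul (P.mul q p) q := by
  intro p
  by_cases hp : p = P.zero
  · subst hp
    refine ⟨P.zero, ⟨by rw [P.zero_mul, P.zero_mul], by rw [P.zero_mul, P.zero_mul]⟩, ?_⟩
    intro q ⟨_, h2⟩
    rw [P.mul_zero, P.zero_mul] at h2
    exact h2
  · obtain ⟨a, ha⟩ : ∃ a, P.tgt p = some a :=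
      Option.ne_none_iff_exists'.mp (fun h => hp ((P.tgt_eq_none p).mp h))
    obtain ⟨b, hb⟩ : ∃ b, P.src p = some b :=
      Option.ne_none_iff_exists'.mp (fun h => hp ((P.src_eq_none p).mp h))
    obtain ⟨hip, hpi, hpr, hrp⟩ := P.key p hp a b ha hb
    have hr0 : P.inv p ≠ P.zero := fun h => hp (by rw [← P.inv_inv p, h, P.inv_zero])
    have htr : P.tgt (P.inv p) = some b := by rw [P.tgt_inv]; exact hb
    have hsr : P.src (P.inv p) = some a := by rw [P.src_inv]; exact ha
    obtain ⟨hir, hri, _, _⟩ := P.key (P.inv p) hr0 b a htr hsr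
    refine ⟨P.inv p, ⟨by rw [hpr, hip], by rw [hrp, hir]⟩, ?_⟩
    intro q ⟨h1, h2⟩
    have hq0 : q ≠ P.zero := fun h => hp (by rw [h1, h, P.mul_zero, P.zero_mul])
    have hpq0 : P.mul p q ≠ P.zero := fun h => hp (by rw [h1, h, P.zero_mul])
    have hqp0 : P.mul q p ≠ P.zero := fun h => hq0 (by rw [h2, h, P.zero_mul])
    -- endpoints of q
    have htq : P.tgt q = some b := by
      have := (P.mul_eq_zero_iff p q).not.mp hpq0
      push_neg at this
      rw [← this.2.2]; exact hb
    have hsq : P.src q = some a := by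
      have h3 : P.mul (P.mul p q) p ≠ P.zero := by rw [← h1]; exact hp
      have := (P.mul_eq_zero_iff (P.mul p q) p).not.mp h3
      push_neg at this
      have h4 : P.src (P.mul p q) = P.tgt p := this.2.2
      rw [P.src_mul p q hpq0] at h4
      rw [h4]; exact ha
    -- q * p = idem b
    have hqp : P.mul q p = P.idem b := by
      have htqp : P.tgt (P.mul q p) = some b := by rw [P.tgt_mul q p hqp0]; exact htq
      have hsqp : P.src (P.mul q p) = some b := by rw [P.src_mul q p hqp0]; exact hb
      obtain ⟨hk, _, _, _⟩ := P.key (P.mul q p) hqp0 b b htqp hsqp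
      calc P.mul q p = P.mul (P.idem b) (P.mul q p) := hk.symm
        _ = P.mul (P.mul (P.inv p) p) (P.mul q p) := by rw [hrp]
        _ = P.mul (P.inv p) (P.mul (P.mul p q) p) := by
            rw [P.mul_assoc, ← P.mul_assoc p q p]
        _ = P.mul (P.inv p) p := by rw [← h1]
        _ = P.idem b := hrp
    -- conclude q = inv p
    have hpq : P.mul p q = P.idem a := by
      have htpq : P.tgt (P.mul p q) = some a := by rw [P.tgt_mul p q hpq0]; exact ha
      have hspq : P.src (P.mul p q) = some a := by rw [P.src_mul p q hpq0]; exact hsq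
      obtain ⟨_, hk, _, _⟩ := P.key (P.mul p q) hpq0 a a htpq hspq
      calc P.mul p q = P.mul (P.mul p q) (P.idem a) := hk.symm
        _ = P.mul (P.mul p q) (P.mul p (P.inv p)) := by rw [hpr]
        _ = P.mul (P.mul (P.mul p q) p) (P.inv p) := (P.mul_assoc _ _ _).symm
        _ = P.mul p (P.inv p) := by rw [← h1]
        _ = P.idem a := hpr
    calc q = P.mul (P.mul q p) q := h2
      _ = P.mul (P.idem b) q := by rw [hqp]
      _ = P.mul (P.mul (P.inv p) p) q := by rw [hrp]
      _ = P.mul (P.inv p) (P.mul p q) := P.mul_assoc _ _ _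
      _ = P.mul (P.inv p) (P.idem a) := by rw [hpq]
      _ = P.inv p := hri
end

section
/- In an inverse-containing semigroup in which every element has at least one inverse, uniqueness of inverses holds if and only if all idempotents commute. -/
/-- For a semigroup in which every element has an inverse, uniqueness of inverses is
equivalent to the requirement that all idempotents commute. -/
theorem statement5 {S : Type*} [Semigroup S]
    (h : ∀ a : S, ∃ b : S, a = a * b * a ∧ b = b * a * b) :
    (∀ a : S, ∃! b : S, a = a * b * a ∧ b = b * a * b) ↔
      (∀ e f : S, e * e = e → f * f = f → e * f = f * e) := by
  constructor
  · intro hu e f he hf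
    -- Key: product of two idempotents is idempotent.
    have key : ∀ u v : S, u * u = u → v * v = v → (u * v) * (u * v) = u * v := by
      intro u v hu' hv'
      have hu'' : ∀ t : S, u * (u * t) = u * t := fun t => by rw [← mul_assoc, hu']
      have hv'' : ∀ t : S, v * (v * t) = v * t := fun t => by rw [← mul_assoc, hv']
      obtain ⟨x, ⟨hx1, hx2⟩, hxuniq⟩ := hu (u * v)
      have hx1' : ∀ t : S, u * (v * (x * (u * (v * t)))) = u * (v * t) := by
        intro t
        conv_rhs => rw [← mul_assoc, hx1]
        simp [mul_assoc]
      have hx2' : ∀ t : S, x * (u * (v * (x * t))) = x * t := by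
        intro t
        conv_rhs => rw [hx2]
        simp [mul_assoc]
      have hx1n : u * (v * (x * (u * v))) = u * v := by
        conv_rhs => rw [hx1]
        simp [mul_assoc]
      have hx2n : x * (u * (v * x)) = x := by
        conv_rhs => rw [hx2]
        simp [mul_assoc]
      have hy : v * (x * u) = x := by
        apply hxuniq
        constructor
        · simp [mul_assoc, hu'', hv'', hx1n, hx2n, hx1', hx2']
        · simp [mul_assoc, hu'', hv'', hx1n, hx2n, hx1', hx2']
      have hidem : x * x = x := by
        rw [← hy]
        simp [mul_assoc, hu'', hv'', hx1n, hx2n, hx1', hx2']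
      obtain ⟨z, _, hzuniq⟩ := hu x
      have h1 : u * v = z := hzuniq (u * v) ⟨hx2, hx1⟩
      have h2 : x = z := hzuniq x ⟨by rw [hidem, hidem], by rw [hidem, hidem]⟩
      have hux : u * v = x := h1.trans h2.symm
      rw [hux]
      exact hidem
    have hef := key e f he hf
    have hfe := key f e hf he
    have he'' : ∀ t : S, e * (e * t) = e * t := fun t => by rw [← mul_assoc, he]
    have hf'' : ∀ t : S, f * (f * t) = f * t := fun t => by rw [← mul_assoc, hf]
    have hef' : e * (f * (e * f)) = e * f := by rw [← mul_assoc]; exact hef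
    have hfe' : f * (e * (f * e)) = f * e := by rw [← mul_assoc]; exact hfe
    obtain ⟨w, ⟨hw1, hw2⟩, hwuniq⟩ := hu (e * f)
    have h3 : f * e = w := by
      apply hwuniq
      constructor
      · simp [mul_assoc, he'', hf'', hef', hfe']
      · simp [mul_assoc, he'', hf'', hef', hfe']
    have h4 : e * f = w := hwuniq (e * f) ⟨by rw [hef, hef], by rw [hef, hef]⟩
    exact h4.trans h3.symm
  · intro hcomm a
    obtain ⟨b, hb1, hb2⟩ := h a
    refine ⟨b, ⟨hb1, hb2⟩, ?_⟩
    rintro c ⟨hc1, hc2⟩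
    have i_ab : (a * b) * (a * b) = a * b := by
      have : (a * b) * (a * b) = (a * b * a) * b := by simp [mul_assoc]
      rw [this, ← hb1]
    have i_ac : (a * c) * (a * c) = a * c := by
      have : (a * c) * (a * c) = (a * c * a) * c := by simp [mul_assoc]
      rw [this, ← hc1]
    have i_ba : (b * a) * (b * a) = b * a := by
      have : (b * a) * (b * a) = (b * a * b) * a := by simp [mul_assoc]
      rw [this, ← hb2]
    have i_ca : (c * a) * (c * a) = c * a := by
      have : (c * a) * (c * a) = (c * a * c) * a := by simp [mul_assoc]
      rw [this, ← hc2]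
    have step1 : c = c * (a * b) := by
      calc c = c * a * c := hc2
        _ = c * (a * b * a) * c := by rw [← hb1]
        _ = c * ((a * b) * (a * c)) := by simp [mul_assoc]
        _ = c * ((a * c) * (a * b)) := by rw [hcomm (a * b) (a * c) i_ab i_ac]
        _ = (c * a * c) * (a * b) := by simp [mul_assoc]
        _ = c * (a * b) := by rw [← hc2]
    have step2 : b = c * (a * b) := by
      calc b = b * a * b := hb2
        _ = b * (a * c * a) * b := by rw [← hc1]
        _ = ((b * a) * (c * a)) * b := by simp [mul_assoc]
        _ = ((c * a) * (b * a)) * b := by rw [hcomm (b * a) (c * a) i_ba i_ca]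
        _ = (c * a) * (b * a * b) := by simp [mul_assoc]
        _ = (c * a) * b := by rw [← hb2]
        _ = c * (a * b) := by rw [mul_assoc]
    exact step1.trans step2.symm
end

section
/- If [a^x b] and [b^y c] are 1-simplices and there exists z ∈ K with x ≤ z and y ≤ z, then [a^x b] * [b^y c] = [a^z c]. -/
/-- If there exists `z` with `x ≤ z` and `y ≤ z`, then `[a^x b] * [b^y c] = [a^z c]`. -/
theorem statement8 {K : Type*} [PartialOrder K] (P : PathSemigroup K)
    (a b c x y z : K)
    (hax : a ≤ x) (hbx : b ≤ x) (hby : b ≤ y) (hcy : c ≤ y)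
    (hxz : x ≤ z) (hyz : y ≤ z) :
    P.mul (P.simplex a x b hax hbx) (P.simplex b y c hby hcy) =
      P.simplex a z c (le_trans hax hxz) (le_trans hcy hyz) := by
  unfold PathSemigroup.simplex
  have key : ∀ (u v : K) (huv : u ≤ v) (hvz : v ≤ z),
      P.up v u huv = P.mul (P.down v z hvz) (P.up z u (le_trans huv hvz)) := by
    intro u v huv hvz
    have := P.idem_mul_up v u huv
    rw [← P.down_mul_up v z hvz] at this
    rw [P.mul_assoc, P.up_mul_up u v z huv hvz] at this
    exact this.symm
  rw [key b x hbx hxz, key c y hcy hyz,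
    ← P.mul_assoc (P.down a x hax), P.down_mul_down a x z hax hxz,
    ← P.mul_assoc (P.down b y hby), P.down_mul_down b y z hby hyz,
    P.mul_assoc, ← P.mul_assoc (P.up z b (le_trans hbx hxz)),
    P.up_mul_down b z (le_trans hbx hxz), P.idem_mul_up]
end

section
/- If [a^x b], [b^y c], and [a^z c] are 1-simplices and there exists w ∈ K with x, y, z ≤ w, then [a^x b] * [b^y c] = [a^z c]. -/
/-- If `[a^x b]`, `[b^y c]`, `[a^z c]` are 1-simplices and there exists `w` with
`x, y, z ≤ w`, then `[a^x b] * [b^y c] = [a^z c]`. -/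
theorem statement9 {K : Type*} [PartialOrder K] (P : PathSemigroup K)
    (a b c x y z w : K)
    (hax : a ≤ x) (hbx : b ≤ x) (hby : b ≤ y) (hcy : c ≤ y)
    (haz : a ≤ z) (hcz : c ≤ z)
    (hxw : x ≤ w) (hyw : y ≤ w) (hzw : z ≤ w) :
    P.mul (P.simplex a x b hax hbx) (P.simplex b y c hby hcy) =
      P.simplex a z c haz hcz := by
  have key : ∀ (u v s : K) (huv : u ≤ v) (hsv : s ≤ v) (hvw : v ≤ w),
      P.simplex u v s huv hsv = P.simplex u w s (huv.trans hvw) (hsv.trans hvw) := by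
    intro u v s huv hsv hvw
    unfold PathSemigroup.simplex
    rw [← P.down_mul_down u v w huv hvw, ← P.up_mul_up s v w hsv hvw,
      P.mul_assoc, ← P.mul_assoc (P.down v w hvw), P.down_mul_up v w hvw,
      P.idem_mul_up]
  rw [key a x b hax hbx hxw, key b y c hby hcy hyw, key a z c haz hcz hzw]
  unfold PathSemigroup.simplex
  rw [P.mul_assoc, ← P.mul_assoc (P.up w b _), P.up_mul_down, P.idem_mul_up]
end

section
/- If the poset K is upward directed, then for all a, b, x, y ∈ K with a, b ≤ x and a, b ≤ y, the 1-simplices coincide: (a,x)*\overline{(x,b)} = (a,y)*\overline{(y,b)}. -/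
/-- If the poset `K` is upward directed, then 1-simplices do not depend on the support:
`(a,x)*\overline{(x,b)} = (a,y)*\overline{(y,b)}` whenever `a, b ≤ x` and `a, b ≤ y`. -/
theorem statement13 {K : Type*} [PartialOrder K]
    (hdir : ∀ a b : K, ∃ c, a ≤ c ∧ b ≤ c)
    (P : PathSemigroup K) (a b x y : K)
    (hax : a ≤ x) (hbx : b ≤ x) (hay : a ≤ y) (hby : b ≤ y) :
    P.simplex a x b hax hbx = P.simplex a y b hay hby := by
  have key : ∀ (u z : K) (hau : a ≤ u) (hbu : b ≤ u) (huz : u ≤ z),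
      P.simplex a u b hau hbu = P.simplex a z b (hau.trans huz) (hbu.trans huz) := by
    intro u z hau hbu huz
    unfold PathSemigroup.simplex
    rw [← P.down_mul_down a u z hau huz, ← P.up_mul_up b u z hbu huz,
      P.mul_assoc, ← P.mul_assoc (P.down u z huz), P.down_mul_up u z huz,
      P.idem_mul_up]
  obtain ⟨z, hxz, hyz⟩ := hdir x y
  rw [key x z hax hbx hxz, key y z hay hby hyz]
end

section
/- If the poset K is upward directed, then every path p ∈ S with ∂_0 p = a and ∂_1 p = b equals the 1-simplex [a,b] (which is well-defined independently of the support). -/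
namespace PathSemigroup

variable {K : Type*} [PartialOrder K]

lemma down_refl (P : PathSemigroup K) (a : K) (h : a ≤ a) : P.down a a h = P.idem a := by
  have h1 : P.idem a = P.mul (P.down a a h) (P.up a a h) := (P.down_mul_up a a h).symm
  rw [h1, ← P.down_mul_down a a a h h, P.mul_assoc, P.down_mul_up, P.down_mul_idem]
  exact P.down_mul_down a a a h h

lemma up_refl (P : PathSemigroup K) (a : K) (h : a ≤ a) : P.up a a h = P.idem a := by
  have h1 : P.idem a = P.mul (P.up a a h) (P.down a a h) := (P.up_mul_down a a h).symm
  rw [h1, ← P.up_mul_up a a a h h, P.mul_assoc, P.up_mul_down, P.up_mul_idem]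
  exact P.up_mul_up a a a h h

/-- Enlarging the support of a simplex doesn't change it. -/
lemma simplex_enlarge (P : PathSemigroup K) (a b x z : K)
    (h1 : a ≤ x) (h2 : b ≤ x) (hxz : x ≤ z) :
    P.simplex a x b h1 h2 = P.simplex a z b (h1.trans hxz) (h2.trans hxz) := by
  unfold simplex
  rw [← P.down_mul_down a x z h1 hxz, ← P.up_mul_up b x z h2 hxz,
    P.mul_assoc, ← P.mul_assoc (P.down x z hxz), P.down_mul_up x z hxz,
    P.idem_mul_up]

lemma simplex_indep (hdir : ∀ a b : K, ∃ c, a ≤ c ∧ b ≤ c)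
    (P : PathSemigroup K) (a b x y : K)
    (h1 : a ≤ x) (h2 : b ≤ x) (h1' : a ≤ y) (h2' : b ≤ y) :
    P.simplex a x b h1 h2 = P.simplex a y b h1' h2' := by
  obtain ⟨z, hxz, hyz⟩ := hdir x y
  rw [P.simplex_enlarge a b x z h1 h2 hxz, P.simplex_enlarge a b y z h1' h2' hyz]

end PathSemigroup

/-- If the poset `K` is upward directed, then every path `p` with `∂₀ p = a`,
`∂₁ p = b` equals the 1-simplex `[a,b]` (for any support). -/
theorem statement14 {K : Type*} [PartialOrder K]
    (hdir : ∀ a b : K, ∃ c, a ≤ c ∧ b ≤ c)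
    (P : PathSemigroup K) (p : P.S) (hp : p ≠ P.zero) (a b : K)
    (ha : P.tgt p = some a) (hb : P.src p = some b) :
    ∀ (x : K) (h1 : a ≤ x) (h2 : b ≤ x), p = P.simplex a x b h1 h2 := by
  have key : ∀ a b : K, P.tgt p = some a → P.src p = some b →
      ∃ (x : K) (h1 : a ≤ x) (h2 : b ≤ x), p = P.simplex a x b h1 h2 := by
    refine P.generated p hp (fun q => ∀ a' b' : K, P.tgt q = some a' → P.src q = some b' →
      ∃ (x : K) (h1 : a' ≤ x) (h2 : b' ≤ x), q = P.simplex a' x b' h1 h2) ?_ ?_ ?_ ?_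
    · intro c a' b' hta hsb
      rw [P.tgt_idem] at hta; rw [P.src_idem] at hsb
      obtain rfl : a' = c := by injection hta with h; exact h.symm
      obtain rfl : b' = a' := by injection hsb with h; exact h.symm
      refine ⟨b', le_refl b', le_refl b', ?_⟩
      rw [PathSemigroup.simplex, P.down_mul_up]
    · intro c d h a' b' hta hsb
      rw [P.tgt_down] at hta; rw [P.src_down] at hsb
      obtain rfl : a' = c := by injection hta with h; exact h.symm
      obtain rfl : b' = d := by injection hsb with h; exact h.symm
      refine ⟨b', h, le_refl b', ?_⟩
      rw [PathSemigroup.simplex, P.up_refl, P.down_mul_idem]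
    · intro c d h a' b' hta hsb
      rw [P.tgt_up] at hta; rw [P.src_up] at hsb
      obtain rfl : a' = c := by injection hta with h; exact h.symm
      obtain rfl : b' = d := by injection hsb with h; exact h.symm
      refine ⟨a', le_refl a', h, ?_⟩
      rw [PathSemigroup.simplex, P.down_refl, P.idem_mul_up]
    · intro x y hx hy hne a' b' hta hsb
      have hx0 : x ≠ P.zero := fun h => hne (by rw [h, P.zero_mul])
      have hy0 : y ≠ P.zero := fun h => hne (by rw [h, P.mul_zero])
      have hsx : P.src x = P.tgt y := by
        by_contra h
        exact hne ((P.mul_eq_zero_iff x y).mpr (Or.inr (Or.inr h)))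
      obtain ⟨c, hc⟩ : ∃ c, P.tgt y = some c := by
        rcases h : P.tgt y with _ | c
        · exact absurd ((P.tgt_eq_none y).mp h) hy0
        · exact ⟨c, rfl⟩
      have hta' : P.tgt x = some a' := by rw [← hta, P.tgt_mul x y hne]
      have hsb' : P.src y = some b' := by rw [← hsb, P.src_mul x y hne]
      obtain ⟨u, hau, hcu, hxeq⟩ := hx a' c hta' (hsx.trans hc)
      obtain ⟨v, hcv, hbv, hyeq⟩ := hy c b' hc hsb'
      obtain ⟨z, huz, hvz⟩ := hdir u v
      refine ⟨z, hau.trans huz, hbv.trans hvz, ?_⟩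
      rw [hxeq, hyeq, P.simplex_enlarge a' c u z hau hcu huz,
        P.simplex_enlarge c b' v z hcv hbv hvz]
      unfold PathSemigroup.simplex
      rw [P.mul_assoc, ← P.mul_assoc (P.up z c (hcu.trans huz)),
        P.up_mul_down, P.idem_mul_up]
  obtain ⟨y, h1', h2', hpeq⟩ := key a b ha hb
  intro x h1 h2
  rw [hpeq, PathSemigroup.simplex_indep hdir P a b y x h1' h2' h1 h2]
end

section
/- If the poset K is upward directed, then every loop group G_a is trivial: every loop g at a equals i_a. -/
namespace PathSemigroup

variable {K : Type*} [PartialOrder K]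

lemma up_self (P : PathSemigroup K) (b : K) (h : b ≤ b) : P.up b b h = P.idem b := by
  have h1 := P.up_mul_up b b b h h
  have h2 := P.up_mul_idem b b h
  have := calc P.idem b = P.mul (P.up b b h) (P.down b b h) := (P.up_mul_down b b h).symm
    _ = P.mul (P.mul (P.up b b h) (P.up b b h)) (P.down b b h) := by rw [h1]
    _ = P.mul (P.up b b h) (P.mul (P.up b b h) (P.down b b h)) := P.mul_assoc _ _ _
    _ = P.mul (P.up b b h) (P.idem b) := by rw [P.up_mul_down]
    _ = P.up b b h := h2
  exact this.symm

lemma down_self (P : PathSemigroup K) (b : K) (h : b ≤ b) : P.down b b h = P.idem b := by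
  have h1 := P.down_mul_down b b b h h
  have h2 := P.down_mul_idem b b h
  have := calc P.idem b = P.mul (P.down b b h) (P.up b b h) := (P.down_mul_up b b h).symm
    _ = P.mul (P.mul (P.down b b h) (P.down b b h)) (P.up b b h) := by rw [h1]
    _ = P.mul (P.down b b h) (P.mul (P.down b b h) (P.up b b h)) := P.mul_assoc _ _ _
    _ = P.mul (P.down b b h) (P.idem b) := by rw [P.down_mul_up]
    _ = P.down b b h := h2
  exact this.symm

lemma up_mul_down' (P : PathSemigroup K) {u m v w : K} (hmu : m ≤ u) (hmv : m ≤ v)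
    (huw : u ≤ w) (hvw : v ≤ w) :
    P.mul (P.up u m hmu) (P.down m v hmv) = P.mul (P.down u w huw) (P.up w v hvw) := by
  have h1 : P.up u m hmu = P.mul (P.down u w huw) (P.up w m (hmu.trans huw)) := by
    rw [← P.up_mul_up m u w hmu huw, ← P.mul_assoc, P.down_mul_up, P.idem_mul_up]
  have h2 : P.mul (P.up w m (hmu.trans huw)) (P.down m v hmv) = P.up w v hvw := by
    rw [← P.up_mul_up m v w hmv hvw, P.mul_assoc, P.up_mul_down, P.up_mul_idem]
  rw [h1, P.mul_assoc, h2]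

lemma exists_simplex (hdir : ∀ a b : K, ∃ c, a ≤ c ∧ b ≤ c) (P : PathSemigroup K)
    (p : P.S) (hp : p ≠ P.zero) :
    ∀ b c : K, P.src p = some b → P.tgt p = some c →
      ∃ x, ∃ h1 : c ≤ x, ∃ h2 : b ≤ x,
        p = P.mul (P.down c x h1) (P.up x b h2) := by
  refine P.generated p hp
    (fun p => ∀ b c : K, P.src p = some b → P.tgt p = some c →
      ∃ x, ∃ h1 : c ≤ x, ∃ h2 : b ≤ x, p = P.mul (P.down c x h1) (P.up x b h2))
    ?_ ?_ ?_ ?_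
  · intro a b c hs ht
    rw [P.src_idem] at hs; rw [P.tgt_idem] at ht
    obtain rfl : a = b := by injection hs
    obtain rfl : a = c := by injection ht
    exact ⟨a, le_refl a, le_refl a, (P.down_mul_up a a (le_refl a)).symm⟩
  · intro a b h b' c' hs ht
    rw [P.src_down] at hs; rw [P.tgt_down] at ht
    obtain rfl : b = b' := by injection hs
    obtain rfl : a = c' := by injection ht
    refine ⟨b, h, le_refl b, ?_⟩
    rw [P.up_self, P.down_mul_idem]
  · intro a b h b' c' hs ht
    rw [P.src_up] at hs; rw [P.tgt_up] at ht
    obtain rfl : b = b' := by injection hs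
    obtain rfl : a = c' := by injection ht
    refine ⟨a, le_refl a, h, ?_⟩
    rw [P.down_self, P.idem_mul_up]
  · intro x y hx hy hmul b c hs ht
    rw [P.src_mul x y hmul] at hs
    rw [P.tgt_mul x y hmul] at ht
    have hnz := (not_iff_not.mpr (P.mul_eq_zero_iff x y)).mp hmul
    push_neg at hnz
    obtain ⟨hx0, hy0, hst⟩ := hnz
    obtain ⟨m, hm⟩ : ∃ m, P.src x = some m := by
      cases h : P.src x with
      | none => exact absurd ((P.src_eq_none x).mp h) hx0
      | some m => exact ⟨m, rfl⟩
    have hty : P.tgt y = some m := hst ▸ hm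
    obtain ⟨u, hcu, hmu, hxeq⟩ := hx m c hm ht
    obtain ⟨v, hmv, hbv, hyeq⟩ := hy b m hs hty
    obtain ⟨w, huw, hvw⟩ := hdir u v
    refine ⟨w, hcu.trans huw, hbv.trans hvw, ?_⟩
    rw [hxeq, hyeq, P.mul_assoc, ← P.mul_assoc (P.up u m hmu),
      P.up_mul_down' hmu hmv huw hvw, ← P.mul_assoc, ← P.mul_assoc,
      P.down_mul_down, P.mul_assoc, P.up_mul_up]

end PathSemigroup

/-- If the poset `K` is upward directed, then every loop group `G_a` is trivial:
every loop `g` at `a` equals `i_a`. -/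
theorem statement15 {K : Type*} [PartialOrder K]
    (hdir : ∀ a b : K, ∃ c, a ≤ c ∧ b ≤ c)
    (P : PathSemigroup K) (a : K) (g : P.S) (hg : g ∈ P.Loop a) :
    g = P.idem a := by
  obtain ⟨hg0, hgt, hgs⟩ := hg
  obtain ⟨x, h1, h2, hrep⟩ := PathSemigroup.exists_simplex hdir P g hg0 a a hgs hgt
  rw [hrep, P.down_mul_up]
end

section
/- If K is upward directed, then 1-simplices compose: [a,b] * [b,c] = [a,c] for all a, b, c ∈ K. -/
theorem simplex_mono {K : Type*} [PartialOrder K] (P : PathSemigroup K)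
    (a x w c : K) (h1 : a ≤ x) (h2 : c ≤ x) (hxw : x ≤ w) :
    P.simplex a x c h1 h2 = P.simplex a w c (h1.trans hxw) (h2.trans hxw) := by
  unfold PathSemigroup.simplex
  rw [← P.down_mul_down a x w h1 hxw, ← P.up_mul_up c x w h2 hxw,
    P.mul_assoc, ← P.mul_assoc (P.down x w hxw), P.down_mul_up x w hxw,
    P.idem_mul_up x c h2]

theorem simplex_indep {K : Type*} [PartialOrder K]
    (hdir : ∀ a b : K, ∃ c, a ≤ c ∧ b ≤ c) (P : PathSemigroup K)
    (a x z c : K) (h1 : a ≤ x) (h2 : c ≤ x) (h3 : a ≤ z) (h4 : c ≤ z) :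
    P.simplex a x c h1 h2 = P.simplex a z c h3 h4 := by
  obtain ⟨w, hxw, hzw⟩ := hdir x z
  rw [simplex_mono P a x w c h1 h2 hxw, simplex_mono P a z w c h3 h4 hzw]

/-- If `K` is upward directed, then 1-simplices compose: `[a,b] * [b,c] = [a,c]`
for all `a, b, c ∈ K` (with any choices of supports). -/
theorem statement16 {K : Type*} [PartialOrder K]
    (hdir : ∀ a b : K, ∃ c, a ≤ c ∧ b ≤ c)
    (P : PathSemigroup K) (a b c x y z : K)
    (hax : a ≤ x) (hbx : b ≤ x) (hby : b ≤ y) (hcy : c ≤ y)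
    (haz : a ≤ z) (hcz : c ≤ z) :
    P.mul (P.simplex a x b hax hbx) (P.simplex b y c hby hcy) =
      P.simplex a z c haz hcz := by
  obtain ⟨w, hxw, hyw⟩ := hdir x y
  rw [simplex_indep hdir P a x w b hax hbx (hax.trans hxw) (hbx.trans hxw),
    simplex_indep hdir P b y w c hby hcy (hby.trans hyw) (hcy.trans hyw)]
  unfold PathSemigroup.simplex
  rw [P.mul_assoc, ← P.mul_assoc (P.up w b _), P.up_mul_down b w,
    P.idem_mul_up w c]
  exact simplex_indep hdir P a w z c (hax.trans hxw) (hcy.trans hyw) haz hcz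
end

section
/- Let K be an upward directed countable poset written as a disjoint union K = E_1 ∪ ... ∪ E_n of countable sets, with bijections φ_i : E_i → K. Then the operators T_{φ_i} = ⊕_{x ∈ E_i} T_{[x, φ_i(x)]} on ℓ²(S) satisfy the Cuntz relations: T_{φ_i}^* T_{φ_i} = id, T_{φ_i}^* T_{φ_j} = 0 for i ≠ j, and Σ_{i=1}^n T_{φ_i} T_{φ_i}^* = id. -/
namespace PathSemigroup
variable {K : Type*} [PartialOrder K]

/-- The Hilbert space `ℓ²(S)` with orthonormal basis indexed by the nonzero paths. -/
abbrev H (P : PathSemigroup K) : Type _ := lp (fun _ : {p : P.S // p ≠ P.zero} => ℂ) 2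

open Classical

/-- The basis vector `e_p` of `ℓ²(S)` for a path `p` (interpreted as `0` for the empty path). -/
noncomputable def e (P : PathSemigroup K) (p : P.S) : P.H :=
  if h : p ≠ P.zero then lp.single 2 (⟨p, h⟩ : {p : P.S // p ≠ P.zero}) (1 : ℂ) else 0

end PathSemigroup

/-!
`T_φ` prepends to a path `q` ending at `a = φ x` the 1-simplex `[x,a]`, and `T_φ^*` prepends
`[a,x]` to a path ending at `x ∈ E`; since `[a,x][x,a] = i_a` (through any common upper bound,
which exists because `K` is directed) the two undo each other. `T_{φ_i}^* T_{φ_j} = 0` because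
`T_{φ_j}` produces paths ending in `E_j`, on which `T_{φ_i}^*` vanishes, and on a path ending
at `a` only the summand for the unique `E_i ∋ a` survives in `Σ T_{φ_i} T_{φ_i}^*`.
-/

namespace PathSemigroup

variable {K : Type*} [PartialOrder K] (P : PathSemigroup K)

theorem down_ne_zero (a b : K) (h : a ≤ b) : P.down a b h ≠ P.zero := fun h0 =>
  Option.some_ne_none b ((P.src_down a b h).symm.trans ((P.src_eq_none _).2 h0))

theorem up_ne_zero (a b : K) (h : b ≤ a) : P.up a b h ≠ P.zero := fun h0 =>
  Option.some_ne_none b ((P.src_up a b h).symm.trans ((P.src_eq_none _).2 h0))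

theorem exists_tgt_eq_some {p : P.S} (hp : p ≠ P.zero) : ∃ a, P.tgt p = some a :=
  Option.ne_none_iff_exists'.1 fun h => hp ((P.tgt_eq_none p).1 h)

theorem mul_ne_zero {p q : P.S} (hp : p ≠ P.zero) (hq : q ≠ P.zero) (h : P.src p = P.tgt q) :
    P.mul p q ≠ P.zero := by
  simp [P.mul_eq_zero_iff, hp, hq, h]

theorem idem_mul_of_tgt_eq {q : P.S} (hq : q ≠ P.zero) {a : K} (ha : P.tgt q = some a) :
    P.mul (P.idem a) q = q := by
  refine P.generated q hq (fun p => ∀ b, P.tgt p = some b → P.mul (P.idem b) p = p)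
    ?_ ?_ ?_ ?_ a ha
  · intro u b hb
    obtain rfl : u = b := Option.some.inj ((P.tgt_idem u).symm.trans hb)
    exact P.idem_mul_idem u
  · intro u v h b hb
    obtain rfl : u = b := Option.some.inj ((P.tgt_down u v h).symm.trans hb)
    exact P.idem_mul_down u v h
  · intro u v h b hb
    obtain rfl : u = b := Option.some.inj ((P.tgt_up u v h).symm.trans hb)
    exact P.idem_mul_up u v h
  · intro x y hx _ hxy b hb
    rw [← P.mul_assoc, hx b ((P.tgt_mul x y hxy).symm.trans hb)]

section Simplex

variable {a x c : K} (h1 : a ≤ x) (h2 : c ≤ x)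

theorem simplex_ne_zero : P.simplex a x c h1 h2 ≠ P.zero :=
  P.mul_ne_zero (P.down_ne_zero a x h1) (P.up_ne_zero x c h2) (by rw [P.src_down, P.tgt_up])

theorem src_simplex : P.src (P.simplex a x c h1 h2) = some c := by
  rw [simplex, P.src_mul _ _ (P.simplex_ne_zero h1 h2), P.src_up]

theorem tgt_simplex : P.tgt (P.simplex a x c h1 h2) = some a := by
  rw [simplex, P.tgt_mul _ _ (P.simplex_ne_zero h1 h2), P.tgt_down]

theorem simplex_mul_simplex :
    P.mul (P.simplex a x c h1 h2) (P.simplex c x a h2 h1) = P.idem a := by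
  rw [simplex, simplex, P.mul_assoc, ← P.mul_assoc (P.up x c h2), P.up_mul_down,
    ← P.mul_assoc, P.down_mul_idem, P.down_mul_up]

variable {q : P.S}

theorem simplex_mul_ne_zero (hq : q ≠ P.zero) (hc : P.tgt q = some c) :
    P.mul (P.simplex a x c h1 h2) q ≠ P.zero :=
  P.mul_ne_zero (P.simplex_ne_zero h1 h2) hq (by rw [P.src_simplex, hc])

theorem tgt_simplex_mul (hq : q ≠ P.zero) (hc : P.tgt q = some c) :
    P.tgt (P.mul (P.simplex a x c h1 h2) q) = some a := by
  rw [P.tgt_mul _ _ (P.simplex_mul_ne_zero h1 h2 hq hc), P.tgt_simplex]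

theorem simplex_mul_simplex_mul (hq : q ≠ P.zero) (hc : P.tgt q = some c) :
    P.mul (P.simplex c x a h2 h1) (P.mul (P.simplex a x c h1 h2) q) = q := by
  rw [← P.mul_assoc, P.simplex_mul_simplex, P.idem_mul_of_tgt_eq hq hc]

end Simplex

theorem ext_e {A B : P.H →L[ℂ] P.H} (h : ∀ p, p ≠ P.zero → A (P.e p) = B (P.e p)) :
    A = B := by
  classical
  refine lp.ext_continuousLinearMap ENNReal.ofNat_ne_top fun ⟨p, hp⟩ => ?_
  refine ContinuousLinearMap.ext_ring ?_
  simpa [e, hp] using h p hp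

def KillsOutside (T : P.H →L[ℂ] P.H) (E : Set K) : Prop :=
  ∀ q, q ≠ P.zero → ∀ a : K, P.tgt q = some a → a ∉ E → T (P.e q) = 0

variable {E E' : Set K} (φ : E ≃ K) (T T' : P.H →L[ℂ] P.H)

/-- `T = T_φ`, read on the basis vectors. -/
def IsShift : Prop :=
  ∀ q, q ≠ P.zero → ∀ a : K, P.tgt q = some a →
    ∀ (x : K) (hx : x ∈ E), φ ⟨x, hx⟩ = a →
      ∀ (c : K) (h1 : x ≤ c) (h2 : a ≤ c), T (P.e q) = P.e (P.mul (P.simplex x c a h1 h2) q)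

/-- `T = T_φ^*` on the basis vectors `e_q` with `q` ending in `E`. -/
def IsCoshift : Prop :=
  ∀ q, q ≠ P.zero → ∀ a : K, P.tgt q = some a →
    ∀ (ha : a ∈ E) (c : K) (h1 : φ ⟨a, ha⟩ ≤ c) (h2 : a ≤ c),
      T (P.e q) = P.e (P.mul (P.simplex (φ ⟨a, ha⟩) c a h1 h2) q)

variable {P φ T T'} [IsDirectedOrder K]

theorem IsShift.exists_apply_e (hT : IsShift P φ T) {q : P.S} (hq : q ≠ P.zero) :
    ∃ p, p ≠ P.zero ∧ (∃ x ∈ E, P.tgt p = some x) ∧ T (P.e q) = P.e p := by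
  obtain ⟨a, ha⟩ := P.exists_tgt_eq_some hq
  obtain ⟨⟨x, hx⟩, rfl⟩ := φ.surjective a
  obtain ⟨c, hxc, hac⟩ := exists_ge_ge x (φ ⟨x, hx⟩)
  exact ⟨_, P.simplex_mul_ne_zero hxc hac hq ha, ⟨x, hx, P.tgt_simplex_mul hxc hac hq ha⟩,
    hT q hq _ ha x hx rfl c hxc hac⟩

theorem IsCoshift.apply_shift_apply_e (hT' : IsCoshift P φ T') (hT : IsShift P φ T) {q : P.S}
    (hq : q ≠ P.zero) : T' (T (P.e q)) = P.e q := by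
  obtain ⟨a, ha⟩ := P.exists_tgt_eq_some hq
  obtain ⟨⟨x, hx⟩, rfl⟩ := φ.surjective a
  obtain ⟨c, hxc, hac⟩ := exists_ge_ge x (φ ⟨x, hx⟩)
  rw [hT q hq _ ha x hx rfl c hxc hac,
    hT' _ (P.simplex_mul_ne_zero hxc hac hq ha) x (P.tgt_simplex_mul hxc hac hq ha) hx c hac hxc,
    P.simplex_mul_simplex_mul hxc hac hq ha]

theorem IsShift.apply_coshift_apply_e (hT : IsShift P φ T) (hT' : IsCoshift P φ T') {q : P.S}
    (hq : q ≠ P.zero) {a : K} (ha : P.tgt q = some a) (haE : a ∈ E) :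
    T (T' (P.e q)) = P.e q := by
  obtain ⟨c, hφc, hac⟩ := exists_ge_ge (φ ⟨a, haE⟩) a
  rw [hT' q hq a ha haE c hφc hac,
    hT _ (P.simplex_mul_ne_zero hφc hac hq ha) _ (P.tgt_simplex_mul hφc hac hq ha) a haE rfl c
      hac hφc,
    P.simplex_mul_simplex_mul hφc hac hq ha]

theorem KillsOutside.apply_shift_apply_e (hT' : KillsOutside P T' E') (hT : IsShift P φ T)
    (hE : Disjoint E' E) {q : P.S} (hq : q ≠ P.zero) : T' (T (P.e q)) = 0 := by
  obtain ⟨p, hp, ⟨x, hx, hpx⟩, hTq⟩ := hT.exists_apply_e hq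
  rw [hTq, hT' p hp x hpx (Set.disjoint_right.1 hE hx)]

end PathSemigroup

theorem statement19_general {K : Type*} [PartialOrder K]
    (hdir : ∀ a b : K, ∃ c, a ≤ c ∧ b ≤ c)
    (P : PathSemigroup K)
    (n : ℕ) (E : Fin n → Set K)
    (hdisj : ∀ i j, i ≠ j → Disjoint (E i) (E j))
    (hcover : (⋃ i, E i) = Set.univ)
    (φ : (i : Fin n) → (E i ≃ K))
    (U : Fin n → (P.H →L[ℂ] P.H))
    (hU : ∀ (i : Fin n) (q : P.S), q ≠ P.zero → ∀ a : K, P.tgt q = some a →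
      ∀ (x : K) (hx : x ∈ E i), φ i ⟨x, hx⟩ = a →
        ∀ (c : K) (h1 : x ≤ c) (h2 : a ≤ c),
          U i (P.e q) = P.e (P.mul (P.simplex x c a h1 h2) q))
    (hUadj : ∀ (i : Fin n) (q : P.S), q ≠ P.zero → ∀ a : K, P.tgt q = some a →
      ∀ (ha : a ∈ E i) (c : K) (h1 : φ i ⟨a, ha⟩ ≤ c) (h2 : a ≤ c),
        ContinuousLinearMap.adjoint (U i) (P.e q) =
          P.e (P.mul (P.simplex (φ i ⟨a, ha⟩) c a h1 h2) q))
    (hUadj0 : ∀ (i : Fin n) (q : P.S), q ≠ P.zero → ∀ a : K, P.tgt q = some a →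
      a ∉ E i → ContinuousLinearMap.adjoint (U i) (P.e q) = 0) :
    (∀ i, ContinuousLinearMap.adjoint (U i) ∘L U i = ContinuousLinearMap.id ℂ P.H) ∧
    (∀ i j, i ≠ j → ContinuousLinearMap.adjoint (U i) ∘L U j = 0) ∧
    (∑ i, U i ∘L ContinuousLinearMap.adjoint (U i)) = ContinuousLinearMap.id ℂ P.H := by
  have : IsDirectedOrder K := ⟨hdir⟩
  have hS : ∀ i, P.IsShift (φ i) (U i) := hU
  have hC : ∀ i, P.IsCoshift (φ i) (ContinuousLinearMap.adjoint (U i)) := hUadj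
  have hK : ∀ i, P.KillsOutside (ContinuousLinearMap.adjoint (U i)) (E i) := hUadj0
  refine ⟨fun i => P.ext_e fun q hq => ?_, fun i j hij => P.ext_e fun q hq => ?_,
    P.ext_e fun q hq => ?_⟩
  · exact (hC i).apply_shift_apply_e (hS i) hq
  · exact (hK i).apply_shift_apply_e (hS j) (hdisj i j hij) hq
  · obtain ⟨a, ha⟩ := P.exists_tgt_eq_some hq
    obtain ⟨i, haE⟩ := Set.mem_iUnion.1 (hcover.symm ▸ Set.mem_univ a)
    rw [sum_apply,
      Finset.sum_eq_single_of_mem i (Finset.mem_univ i) fun j _ hji => ?_]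
    · exact (hS i).apply_coshift_apply_e (hC i) hq ha haE
    · rw [ContinuousLinearMap.comp_apply,
        hK j q hq a ha (Set.disjoint_left.1 (hdisj i j hji.symm) haE), map_zero]

/-- For an upward directed countable poset `K` written as a disjoint union
`K = E_1 ∪ ... ∪ E_n` of sets with bijections `φ_i : E_i → K`, the operators
`T_{φ_i} = ⊕_{x ∈ E_i} T_{[x, φ_i(x)]}` on `ℓ²(S)` satisfy the Cuntz relations:
`T_{φ_i}^* T_{φ_i} = id`, `T_{φ_i}^* T_{φ_j} = 0` for `i ≠ j`, and
`Σ_i T_{φ_i} T_{φ_i}^* = id`. -/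
theorem statement19 {K : Type*} [PartialOrder K] [Countable K]
    (hdir : ∀ a b : K, ∃ c, a ≤ c ∧ b ≤ c)
    (P : PathSemigroup K)
    (n : ℕ) (E : Fin n → Set K)
    (hdisj : ∀ i j, i ≠ j → Disjoint (E i) (E j))
    (hcover : (⋃ i, E i) = Set.univ)
    (φ : (i : Fin n) → (E i ≃ K))
    (U : Fin n → (P.H →L[ℂ] P.H))
    (hU : ∀ (i : Fin n) (q : P.S), q ≠ P.zero → ∀ a : K, P.tgt q = some a →
      ∀ (x : K) (hx : x ∈ E i), φ i ⟨x, hx⟩ = a →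
        ∀ (c : K) (h1 : x ≤ c) (h2 : a ≤ c),
          U i (P.e q) = P.e (P.mul (P.simplex x c a h1 h2) q))
    (hUadj : ∀ (i : Fin n) (q : P.S), q ≠ P.zero → ∀ a : K, P.tgt q = some a →
      ∀ (ha : a ∈ E i) (c : K) (h1 : φ i ⟨a, ha⟩ ≤ c) (h2 : a ≤ c),
        ContinuousLinearMap.adjoint (U i) (P.e q) =
          P.e (P.mul (P.simplex (φ i ⟨a, ha⟩) c a h1 h2) q))
    (hUadj0 : ∀ (i : Fin n) (q : P.S), q ≠ P.zero → ∀ a : K, P.tgt q = some a →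
      a ∉ E i → ContinuousLinearMap.adjoint (U i) (P.e q) = 0) :
    (∀ i, ContinuousLinearMap.adjoint (U i) ∘L U i = ContinuousLinearMap.id ℂ P.H) ∧
    (∀ i j, i ≠ j → ContinuousLinearMap.adjoint (U i) ∘L U j = 0) ∧
    (∑ i, U i ∘L ContinuousLinearMap.adjoint (U i)) = ContinuousLinearMap.id ℂ P.H :=
  statement19_general hdir P n E hdisj hcover φ U hU hUadj hUadj0
end
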